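/- arXiv:1307.3817 — 9 statements merged into one kernel-verified Lean document; each statement's English description precedes it below -/
import Mathlib

section
/- Let (X,f) be a topological dynamical system. If the product system (X×X, f×f) is transitive (i.e., (X,f) is weakly mixing), then for every positive integer n the n-fold product system (X^n, f×f×⋯×f) (n copies) is transitive. -/
open Function Set Filter Topology MeasureTheory

/-- A topological dynamical system `f : X → X` is (topologically) transitive if for every
two non-empty open subsets `U`, `V` there exists `n ≥ 1` with `f^[n] '' U ∩ V ≠ ∅`. -/
def IsTopTransitive {X : Type*} [TopologicalSpace X] (f : X → X) : Prop :=
  ∀ U V : Set X, IsOpen U → IsOpen V → U.Nonempty → V.Nonempty →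
    ∃ n : ℕ, 1 ≤ n ∧ (f^[n] '' U ∩ V).Nonempty

/-- Multi-transitivity with respect to a vector `a = (a₁, …, a_r)`: the product system
`(X^r, f^{a₁} × ⋯ × f^{a_r})` is transitive. -/
def MultiTransWrt {X : Type*} [TopologicalSpace X] (f : X → X) {r : ℕ} (a : Fin r → ℕ) : Prop :=
  IsTopTransitive (fun x : Fin r → X => fun i => f^[a i] (x i))

/-- `(X, f)` is multi-transitive if it is multi-transitive with respect to `(1, 2, …, n)`
for every `n ≥ 1`. -/
def MultiTrans {X : Type*} [TopologicalSpace X] (f : X → X) : Prop :=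
  ∀ n : ℕ, 1 ≤ n → MultiTransWrt f (fun i : Fin n => (i : ℕ) + 1)

/-- `(X, f)` is strongly multi-transitive if it is multi-transitive with respect to every
vector of positive integers. -/
def StrongMultiTrans {X : Type*} [TopologicalSpace X] (f : X → X) : Prop :=
  ∀ r : ℕ, 1 ≤ r → ∀ a : Fin r → ℕ, (∀ i, 1 ≤ a i) → MultiTransWrt f a

/-- The hitting time set `N(U, V) = {n ≥ 1 : f^[n] '' U ∩ V ≠ ∅}`. -/
def HittingTimes {X : Type*} [TopologicalSpace X] (f : X → X) (U V : Set X) : Set ℕ :=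
  {n : ℕ | 1 ≤ n ∧ (f^[n] '' U ∩ V).Nonempty}

/-!
Furstenberg's intersection lemma: if `f × f` is transitive, then for nonempty open
`U₁, V₁, U₂, V₂` a time `m ∈ N(U₁, U₂) ∩ N(V₁, V₂)` exists, and the nonempty open sets
`U = U₁ ∩ f⁻ᵐ U₂`, `V = V₁ ∩ f⁻ᵐ V₂` satisfy `N(U, V) ⊆ N(U₁, V₁) ∩ N(U₂, V₂)`.
By induction, any finitely many hitting time sets contain a common `N(U, V)`, which is
nonempty since `f` is transitive. Hitting times of `f × ⋯ × f` between open boxes are exactly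
the common hitting times of their sides, and open boxes form a basis of `Xⁿ`.
-/

section HittingTimes

variable {X Y : Type*} [TopologicalSpace X] [TopologicalSpace Y]

theorem mem_hittingTimes {f : X → X} {U V : Set X} {n : ℕ} :
    n ∈ HittingTimes f U V ↔ 1 ≤ n ∧ ∃ x ∈ U, f^[n] x ∈ V := by
  simp only [HittingTimes, mem_ofPred_eq, Set.Nonempty, mem_inter_iff, exists_mem_image]

theorem hittingTimes_mono {f : X → X} {U U' V V' : Set X} (hU : U ⊆ U') (hV : V ⊆ V') :
    HittingTimes f U V ⊆ HittingTimes f U' V' := by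
  intro n hn
  obtain ⟨hn1, x, hx, hxV⟩ := mem_hittingTimes.1 hn
  exact mem_hittingTimes.2 ⟨hn1, x, hU hx, hV hxV⟩

theorem hittingTimes_prodMap (f : X → X) (g : Y → Y) (U₁ V₁ : Set X) (U₂ V₂ : Set Y) :
    HittingTimes (Prod.map f g) (U₁ ×ˢ U₂) (V₁ ×ˢ V₂) =
      HittingTimes f U₁ V₁ ∩ HittingTimes g U₂ V₂ := by
  ext n
  simp only [mem_inter_iff, mem_hittingTimes, Prod.map_iterate, Prod.exists, mem_prod,
    Prod.map_fst, Prod.map_snd]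
  constructor
  · rintro ⟨hn, x, y, ⟨hx, hy⟩, hxV, hyV⟩
    exact ⟨⟨hn, x, hx, hxV⟩, hn, y, hy, hyV⟩
  · rintro ⟨⟨hn, x, hx, hxV⟩, -, y, hy, hyV⟩
    exact ⟨hn, x, y, ⟨hx, hy⟩, hxV, hyV⟩

theorem hittingTimes_pi {ι : Type*} [Nonempty ι] {X : ι → Type*} [∀ i, TopologicalSpace (X i)]
    (f : ∀ i, X i → X i) (U V : ∀ i, Set (X i)) :
    HittingTimes (Pi.map f) (univ.pi U) (univ.pi V) = ⋂ i, HittingTimes (f i) (U i) (V i) := by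
  ext n
  simp only [mem_iInter, mem_hittingTimes, Pi.map_iterate, mem_univ_pi, Pi.map_apply]
  constructor
  · rintro ⟨hn, x, hx, hxV⟩ i
    exact ⟨hn, x i, hx i, hxV i⟩
  · intro h
    choose hn x hx hxV using h
    exact ⟨hn (Classical.arbitrary ι), x, hx, hxV⟩

theorem hittingTimes_inter_preimage_subset (f : X → X) (m : ℕ) (U₁ U₂ V₁ V₂ : Set X) :
    HittingTimes f (U₁ ∩ f^[m] ⁻¹' U₂) (V₁ ∩ f^[m] ⁻¹' V₂) ⊆
      HittingTimes f U₁ V₁ ∩ HittingTimes f U₂ V₂ := by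
  intro n hn
  obtain ⟨hn1, x, ⟨hx₁, hx₂⟩, hxV₁, hxV₂⟩ := mem_hittingTimes.1 hn
  refine ⟨mem_hittingTimes.2 ⟨hn1, x, hx₁, hxV₁⟩, mem_hittingTimes.2 ⟨hn1, f^[m] x, hx₂, ?_⟩⟩
  rwa [mem_preimage, Commute.iterate_iterate_self] at hxV₂

end HittingTimes

section WeaklyMixing

variable {X : Type*} [TopologicalSpace X] {f : X → X}

theorem IsTopTransitive.of_prodMap (hwm : IsTopTransitive (Prod.map f f)) :
    IsTopTransitive f := by
  intro U V hU hV hUn hVn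
  obtain ⟨n, hn⟩ := hwm _ _ (hU.prod hU) (hV.prod hV) (hUn.prod hUn) (hVn.prod hVn)
  exact ⟨n, ((hittingTimes_prodMap f f U V U V).subset hn).1⟩

theorem exists_hittingTimes_subset_inter (hf : Continuous f)
    (hwm : IsTopTransitive (Prod.map f f)) {U₁ V₁ U₂ V₂ : Set X}
    (hU₁ : IsOpen U₁) (hV₁ : IsOpen V₁) (hU₂ : IsOpen U₂) (hV₂ : IsOpen V₂)
    (hU₁n : U₁.Nonempty) (hV₁n : V₁.Nonempty) (hU₂n : U₂.Nonempty) (hV₂n : V₂.Nonempty) :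
    ∃ U V : Set X, IsOpen U ∧ IsOpen V ∧ U.Nonempty ∧ V.Nonempty ∧
      HittingTimes f U V ⊆ HittingTimes f U₁ V₁ ∩ HittingTimes f U₂ V₂ := by
  obtain ⟨m, hm⟩ := hwm _ _ (hU₁.prod hV₁) (hU₂.prod hV₂) (hU₁n.prod hV₁n) (hU₂n.prod hV₂n)
  obtain ⟨hmU, hmV⟩ := (hittingTimes_prodMap f f U₁ U₂ V₁ V₂).subset hm
  obtain ⟨-, x, hx₁, hx₂⟩ := mem_hittingTimes.1 hmU
  obtain ⟨-, y, hy₁, hy₂⟩ := mem_hittingTimes.1 hmV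
  exact ⟨_, _, hU₁.inter (hU₂.preimage (hf.iterate m)), hV₁.inter (hV₂.preimage (hf.iterate m)),
    ⟨x, hx₁, hx₂⟩, ⟨y, hy₁, hy₂⟩, hittingTimes_inter_preimage_subset f m U₁ U₂ V₁ V₂⟩

theorem exists_hittingTimes_subset_biInter (hf : Continuous f)
    (hwm : IsTopTransitive (Prod.map f f)) {ι : Type*} (U V : ι → Set X)
    (hU : ∀ i, IsOpen (U i)) (hV : ∀ i, IsOpen (V i))
    (hUn : ∀ i, (U i).Nonempty) (hVn : ∀ i, (V i).Nonempty) {s : Finset ι} (hs : s.Nonempty) :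
    ∃ U' V' : Set X, IsOpen U' ∧ IsOpen V' ∧ U'.Nonempty ∧ V'.Nonempty ∧
      HittingTimes f U' V' ⊆ ⋂ i ∈ s, HittingTimes f (U i) (V i) := by
  induction hs using Finset.Nonempty.cons_induction with
  | singleton i => exact ⟨U i, V i, hU i, hV i, hUn i, hVn i, by simp⟩
  | cons i s _ _ ih =>
    obtain ⟨U', V', hU', hV', hU'n, hV'n, hsub⟩ := ih
    obtain ⟨U'', V'', hU'', hV'', hU''n, hV''n, hsub'⟩ :=
      exists_hittingTimes_subset_inter hf hwm (hU i) (hV i) hU' hV' (hUn i) (hVn i) hU'n hV'n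
    refine ⟨U'', V'', hU'', hV'', hU''n, hV''n, ?_⟩
    classical
    rw [Finset.cons_eq_insert, Finset.set_biInter_insert]
    exact hsub'.trans (inter_subset_inter_right _ hsub)

theorem iInter_hittingTimes_nonempty (hf : Continuous f)
    (hwm : IsTopTransitive (Prod.map f f)) {ι : Type*} [Finite ι] [Nonempty ι]
    (U V : ι → Set X) (hU : ∀ i, IsOpen (U i)) (hV : ∀ i, IsOpen (V i))
    (hUn : ∀ i, (U i).Nonempty) (hVn : ∀ i, (V i).Nonempty) :
    (⋂ i, HittingTimes f (U i) (V i)).Nonempty := by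
  have := Fintype.ofFinite ι
  obtain ⟨U', V', hU', hV', hU'n, hV'n, hsub⟩ :=
    exists_hittingTimes_subset_biInter hf hwm U V hU hV hUn hVn Finset.univ_nonempty
  obtain ⟨n, hn⟩ := hwm.of_prodMap U' V' hU' hV' hU'n hV'n
  exact ⟨n, by simpa using hsub hn⟩

theorem IsTopTransitive.piMap_of_prodMap (hf : Continuous f)
    (hwm : IsTopTransitive (Prod.map f f)) (ι : Type*) [Finite ι] [Nonempty ι] :
    IsTopTransitive (Pi.map fun _ : ι => f) := by
  rintro U V hU hV ⟨x, hx⟩ ⟨y, hy⟩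
  obtain ⟨u, hu, huU⟩ := isOpen_pi_iff'.1 hU x hx
  obtain ⟨v, hv, hvV⟩ := isOpen_pi_iff'.1 hV y hy
  obtain ⟨n, hn⟩ := iInter_hittingTimes_nonempty hf hwm u v (fun i => (hu i).1)
    (fun i => (hv i).1) (fun i => ⟨x i, (hu i).2⟩) (fun i => ⟨y i, (hv i).2⟩)
  rw [← hittingTimes_pi] at hn
  exact ⟨n, hittingTimes_mono huU hvV hn⟩

end WeaklyMixing

theorem weakly_mixing_implies_nfold_transitive_general
    {X : Type*} [MetricSpace X] (f : X → X) (hf : Continuous f)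
    (hwm : IsTopTransitive (fun p : X × X => (f p.1, f p.2))) :
    ∀ n : ℕ, 1 ≤ n → IsTopTransitive (fun x : Fin n → X => fun i => f (x i)) := by
  intro n hn
  have : Nonempty (Fin n) := ⟨⟨0, hn⟩⟩
  exact IsTopTransitive.piMap_of_prodMap hf hwm (Fin n)

theorem weakly_mixing_implies_nfold_transitive
    {X : Type*} [MetricSpace X] [CompactSpace X] (f : X → X) (hf : Continuous f)
    (hwm : IsTopTransitive (fun p : X × X => (f p.1, f p.2))) :
    ∀ n : ℕ, 1 ≤ n → IsTopTransitive (fun x : Fin n → X => fun i => f (x i)) :=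
  weakly_mixing_implies_nfold_transitive_general f hf hwm
end

section
/- Let (X,f) be a topological dynamical system and n a positive integer. Then (X,f) is multi-transitive if and only if (X,f^n) is multi-transitive. -/
open Function Set Filter Topology MeasureTheory

section IsTopTransitive

variable {X Y : Type*} [TopologicalSpace X] [TopologicalSpace Y]

theorem IsTopTransitive.of_semiconj {g : X → X} {h : Y → Y} {π : X → Y}
    (hg : IsTopTransitive g) (hπ : Continuous π) (hπs : Surjective π) (hconj : Semiconj π g h) :
    IsTopTransitive h := by
  intro U V hU hV hUne hVne
  obtain ⟨k, hk, _, ⟨x, hxU, rfl⟩, hxV⟩ := hg (π ⁻¹' U) (π ⁻¹' V) (hU.preimage hπ)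
    (hV.preimage hπ) (hUne.preimage hπs) (hVne.preimage hπs)
  exact ⟨k, hk, π (g^[k] x), ⟨π x, hxU, (hconj.iterate_right k x).symm⟩, hxV⟩

theorem IsTopTransitive.of_iterate {g : X → X} {n : ℕ} (hg : IsTopTransitive g^[n]) (hn : 0 < n) :
    IsTopTransitive g := by
  intro U V hU hV hUne hVne
  obtain ⟨k, hk, hUV⟩ := hg U V hU hV hUne hVne
  exact ⟨n * k, Nat.mul_pos hn hk, by rwa [iterate_mul]⟩

end IsTopTransitive

section MultiTransWrt

variable {X : Type*} [TopologicalSpace X] {f : X → X}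

theorem multiTransWrt_iterate_iff {r : ℕ} (a : Fin r → ℕ) (n : ℕ) :
    MultiTransWrt f^[n] a ↔ MultiTransWrt f (fun i => n * a i) := by
  simp only [MultiTransWrt, iterate_mul]

theorem MultiTransWrt.of_mul {r n : ℕ} {a : Fin r → ℕ}
    (h : MultiTransWrt f (fun i => n * a i)) (hn : 0 < n) : MultiTransWrt f a := by
  refine IsTopTransitive.of_iterate (g := Pi.map fun i => f^[a i]) (n := n) ?_ hn
  have hmap : (Pi.map fun i => f^[a i])^[n] = Pi.map fun i => f^[n * a i] := by
    simp only [Pi.map_iterate, ← iterate_mul, mul_comm]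
  rw [hmap]
  exact h

theorem MultiTransWrt.comp_injective {r s : ℕ} {b : Fin s → ℕ} (h : MultiTransWrt f b)
    {e : Fin r → Fin s} (he : Injective e) (hr : 0 < r) : MultiTransWrt f (b ∘ e) := by
  refine IsTopTransitive.of_semiconj (π := fun x => x ∘ e) h (by fun_prop) ?_ fun _ => rfl
  intro u
  exact he.surjective_comp_right' (fun _ => u ⟨0, hr⟩) u

theorem MultiTrans.multiTransWrt_mul {n : ℕ} (h : MultiTrans f) (hn : 0 < n) {r : ℕ}
    (hr : 0 < r) : MultiTransWrt f (fun i : Fin r => n * (i + 1)) := by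
  have hpos (i : Fin r) : 0 < n * (i + 1) := Nat.mul_pos hn (Nat.succ_pos i)
  have hle (i : Fin r) : n * (i + 1) ≤ n * r := Nat.mul_le_mul_left n i.isLt
  let e : Fin r → Fin (n * r) := fun i =>
    ⟨n * (i + 1) - 1, by have := hpos i; have := hle i; omega⟩
  have he : Injective e := fun i j hij => by
    have hval : n * (i + 1) = n * (j + 1) := by
      have := congrArg Fin.val hij; have := hpos i; have := hpos j
      simp only [e] at *; omega
    exact Fin.ext (by simpa using Nat.eq_of_mul_eq_mul_left hn hval)
  convert (h (n * r) (Nat.mul_pos hn hr)).comp_injective he hr using 2 with i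
  have := hpos i
  simp only [e, comp_apply]
  omega

end MultiTransWrt

theorem multiTrans_iff_iterate_multiTrans_general
    {X : Type*} [MetricSpace X] (f : X → X)
    (n : ℕ) (hn : 1 ≤ n) :
    MultiTrans f ↔ MultiTrans (f^[n]) := by
  refine ⟨fun h r hr => ?_, fun h r hr => ?_⟩
  · exact (multiTransWrt_iterate_iff _ n).2 (h.multiTransWrt_mul hn hr)
  · exact ((multiTransWrt_iterate_iff _ n).1 (h r hr)).of_mul hn

theorem multiTrans_iff_iterate_multiTrans
    {X : Type*} [MetricSpace X] [CompactSpace X] (f : X → X) (hf : Continuous f)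
    (n : ℕ) (hn : 1 ≤ n) :
    MultiTrans f ↔ MultiTrans (f^[n]) :=
  multiTrans_iff_iterate_multiTrans_general f n hn
end

section
/- Let (X,f) be a topological dynamical system. Then (X,f) is strongly multi-transitive if and only if (X,f) is weakly mixing and multi-transitive. -/
open Function Set Filter Topology MeasureTheory

/-! Multi-transitivity with respect to `a` asks for one `n` with `f^[aᵢ n] '' Uᵢ ∩ Vᵢ ≠ ∅` for
all `i`, so it suffices to find, for each value `k` taken by `a`, one pair of open sets whose
hitting times lie in those of all pairs `(Uᵢ, Vᵢ)` with `aᵢ = k`. Weak mixing provides such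
pairs (Furstenberg: `N(U₁ ∩ f⁻ⁿU₂, V₁ ∩ f⁻ⁿV₂) ⊆ N(U₁, V₁) ∩ N(U₂, V₂)` whenever
`n ∈ N(U₁ × V₁, U₂ × V₂)`), and multi-transitivity with respect to `(1, 2, …, m)` makes all of
them hit at the times `k n` for a common `n`. Conversely, weak mixing is multi-transitivity with
respect to `(1, 1)`. -/

section

variable {X : Type*} [TopologicalSpace X] {f : X → X}

theorem HittingTimes.mono {U U' V V' : Set X} (hU : U ⊆ U') (hV : V ⊆ V') :
    HittingTimes f U V ⊆ HittingTimes f U' V' := by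
  rintro n ⟨hn, x, hxU, hxV⟩
  exact ⟨hn, x, image_mono hU hxU, hV hxV⟩

theorem IsTopTransitive.of_semiconj_s5 {Y : Type*} [TopologicalSpace Y] {g : Y → Y} {e : Y → X}
    (he : Continuous e) (he' : Surjective e) (hsemi : Semiconj e g f)
    (hg : IsTopTransitive g) : IsTopTransitive f := by
  intro U V hU hV hUn hVn
  obtain ⟨n, hn, y, ⟨w, hwU, rfl⟩, hyV⟩ := hg (e ⁻¹' U) (e ⁻¹' V) (hU.preimage he)
    (hV.preimage he) (hUn.preimage he') (hVn.preimage he')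
  exact ⟨n, hn, e (g^[n] w), ⟨e w, hwU, (hsemi.iterate_right n w).symm⟩, hyV⟩

theorem MultiTransWrt.isTopTransitive_prodMap (h : MultiTransWrt f fun _ : Fin 2 => 1) :
    IsTopTransitive (Prod.map f f) :=
  h.of_semiconj_s5 (Homeomorph.finTwoArrow (X := X)).continuous
    (Homeomorph.finTwoArrow (X := X)).surjective fun _ => rfl

theorem IsTopTransitive.exists_hittingTimes_subset (hf : Continuous f)
    (hwm : IsTopTransitive (Prod.map f f)) {U₁ V₁ U₂ V₂ : Set X} (hU₁ : IsOpen U₁)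
    (hV₁ : IsOpen V₁) (hU₂ : IsOpen U₂) (hV₂ : IsOpen V₂) (hU₁n : U₁.Nonempty)
    (hV₁n : V₁.Nonempty) (hU₂n : U₂.Nonempty) (hV₂n : V₂.Nonempty) :
    ∃ U V, IsOpen U ∧ IsOpen V ∧ U.Nonempty ∧ V.Nonempty ∧ U ⊆ U₁ ∧ V ⊆ V₁ ∧
      HittingTimes f U V ⊆ HittingTimes f U₂ V₂ := by
  obtain ⟨n, -, _, ⟨⟨u, v⟩, ⟨hu, hv⟩, rfl⟩, hu₂, hv₂⟩ := hwm (U₁ ×ˢ V₁) (U₂ ×ˢ V₂)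
    (hU₁.prod hV₁) (hU₂.prod hV₂) (hU₁n.prod hV₁n) (hU₂n.prod hV₂n)
  rw [Prod.map_iterate] at hu₂ hv₂
  refine ⟨U₁ ∩ f^[n] ⁻¹' U₂, V₁ ∩ f^[n] ⁻¹' V₂, hU₁.inter (hU₂.preimage (hf.iterate n)),
    hV₁.inter (hV₂.preimage (hf.iterate n)), ⟨u, hu, hu₂⟩, ⟨v, hv, hv₂⟩, inter_subset_left,
    inter_subset_left, ?_⟩
  rintro m ⟨hm, _, ⟨w, ⟨-, hw⟩, rfl⟩, -, hwV⟩
  refine ⟨hm, f^[m] (f^[n] w), mem_image_of_mem _ hw, ?_⟩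
  rwa [← iterate_add_apply, add_comm, iterate_add_apply]

theorem IsTopTransitive.exists_hittingTimes_subset_forall [Nonempty X] (hf : Continuous f)
    (hwm : IsTopTransitive (Prod.map f f)) {ι : Type*} (s : Finset ι) {U V : ι → Set X}
    (hU : ∀ i, IsOpen (U i)) (hV : ∀ i, IsOpen (V i)) (hUn : ∀ i, (U i).Nonempty)
    (hVn : ∀ i, (V i).Nonempty) :
    ∃ A B, IsOpen A ∧ IsOpen B ∧ A.Nonempty ∧ B.Nonempty ∧
      ∀ i ∈ s, HittingTimes f A B ⊆ HittingTimes f (U i) (V i) := by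
  classical
  induction s using Finset.induction_on with
  | empty =>
    exact ⟨univ, univ, isOpen_univ, isOpen_univ, univ_nonempty, univ_nonempty, by simp⟩
  | insert i s _ ih =>
    obtain ⟨A, B, hA, hB, hAn, hBn, hAB⟩ := ih
    obtain ⟨A', B', hA', hB', hA'n, hB'n, hA'A, hB'B, hi⟩ :=
      hwm.exists_hittingTimes_subset hf hA hB (hU i) (hV i) hAn hBn (hUn i) (hVn i)
    refine ⟨A', B', hA', hB', hA'n, hB'n, (Finset.forall_mem_insert _ _ _).2 ⟨hi, ?_⟩⟩
    exact fun j hj => (HittingTimes.mono hA'A hB'B).trans (hAB j hj)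

theorem multiTransWrt_iff {r : ℕ} (a : Fin r → ℕ) :
    MultiTransWrt f a ↔ ∀ U V : Fin r → Set X, (∀ i, IsOpen (U i)) → (∀ i, IsOpen (V i)) →
      (∀ i, (U i).Nonempty) → (∀ i, (V i).Nonempty) →
      ∃ n, 1 ≤ n ∧ ∀ i, (f^[a i * n] '' U i ∩ V i).Nonempty := by
  have iterate_eq (n : ℕ) (x : Fin r → X) :
      (fun x : Fin r → X => fun i => f^[a i] (x i))^[n] x = fun i => f^[a i * n] (x i) := by
    change (Pi.map fun i => f^[a i])^[n] x = _
    simp only [Pi.map_iterate, iterate_mul]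
    rfl
  constructor
  · intro h U V hU hV hUn hVn
    obtain ⟨n, hn, _, ⟨w, hw, rfl⟩, hwV⟩ := h (univ.pi U) (univ.pi V)
      (isOpen_set_pi finite_univ fun i _ => hU i) (isOpen_set_pi finite_univ fun i _ => hV i)
      (univ_pi_nonempty_iff.2 hUn) (univ_pi_nonempty_iff.2 hVn)
    rw [iterate_eq] at hwV
    exact ⟨n, hn, fun i => ⟨_, mem_image_of_mem _ (hw i trivial), hwV i trivial⟩⟩
  · intro h W W' hW hW' ⟨x, hx⟩ ⟨y, hy⟩
    obtain ⟨U, hU, hUW⟩ := isOpen_pi_iff'.1 hW x hx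
    obtain ⟨V, hV, hVW'⟩ := isOpen_pi_iff'.1 hW' y hy
    obtain ⟨n, hn, hit⟩ := h U V (fun i => (hU i).1) (fun i => (hV i).1)
      (fun i => ⟨x i, (hU i).2⟩) (fun i => ⟨y i, (hV i).2⟩)
    choose p hp using fun i => image_inter_nonempty_iff.1 (hit i)
    refine ⟨n, hn, _, mem_image_of_mem _ (hUW fun i _ => (hp i).1), ?_⟩
    rw [iterate_eq]
    exact hVW' fun i _ => (hp i).2

theorem MultiTrans.exists_iterate_mul (hmt : MultiTrans f) (A B : ℕ → Set X)
    (hA : ∀ k, IsOpen (A k)) (hB : ∀ k, IsOpen (B k)) (hAn : ∀ k, (A k).Nonempty)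
    (hBn : ∀ k, (B k).Nonempty) (m : ℕ) :
    ∃ n, 1 ≤ n ∧ ∀ k, 1 ≤ k → k ≤ m → (f^[k * n] '' A k ∩ B k).Nonempty := by
  obtain ⟨n, hn, hit⟩ := (multiTransWrt_iff _).1 (hmt (m + 1) (Nat.le_add_left 1 m))
    (fun j => A (j + 1)) (fun j => B (j + 1)) (fun _ => hA _) (fun _ => hB _)
    (fun _ => hAn _) (fun _ => hBn _)
  refine ⟨n, hn, fun k hk hkm => ?_⟩
  have hj := hit ⟨k - 1, by omega⟩
  rwa [Fin.val_mk, Nat.sub_add_cancel hk] at hj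

theorem MultiTrans.multiTransWrt (hf : Continuous f) (hwm : IsTopTransitive (Prod.map f f))
    (hmt : MultiTrans f) {r : ℕ} (hr : 1 ≤ r) {a : Fin r → ℕ} (ha : ∀ i, 1 ≤ a i) :
    MultiTransWrt f a := by
  rw [multiTransWrt_iff]
  intro U V hU hV hUn hVn
  have : Nonempty X := ⟨(hUn ⟨0, hr⟩).some⟩
  choose A B hA hB hAn hBn hAB using fun k =>
    hwm.exists_hittingTimes_subset_forall hf (Finset.univ.filter (a · = k)) hU hV hUn hVn
  obtain ⟨n, hn, hit⟩ := hmt.exists_iterate_mul A B hA hB hAn hBn (Finset.univ.sup a)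
  refine ⟨n, hn, fun i => ?_⟩
  have hi : a i * n ∈ HittingTimes f (A (a i)) (B (a i)) :=
    ⟨Nat.mul_pos (ha i) hn, hit (a i) (ha i) (Finset.le_sup (Finset.mem_univ i))⟩
  exact (hAB (a i) i (by simp) hi).2

end

theorem strongMultiTrans_iff_weaklyMixing_and_multiTrans_general
    {X : Type*} [MetricSpace X] (f : X → X) (hf : Continuous f) :
    StrongMultiTrans f ↔
      IsTopTransitive (fun p : X × X => (f p.1, f p.2)) ∧ MultiTrans f := by
  constructor
  · intro h
    exact ⟨(h 2 (by norm_num) _ fun _ => le_rfl).isTopTransitive_prodMap,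
      fun n hn => h n hn _ fun i => Nat.le_add_left 1 i⟩
  · rintro ⟨hwm, hmt⟩ r hr a ha
    exact hmt.multiTransWrt hf hwm hr ha

theorem strongMultiTrans_iff_weaklyMixing_and_multiTrans
    {X : Type*} [MetricSpace X] [CompactSpace X] (f : X → X) (hf : Continuous f) :
    StrongMultiTrans f ↔
      IsTopTransitive (fun p : X × X => (f p.1, f p.2)) ∧ MultiTrans f :=
  strongMultiTrans_iff_weaklyMixing_and_multiTrans_general f hf
end

section
/- Let (X,f) be a topological dynamical system. If (X,f) is mildly mixing, then for every vector a = (a₁,…,a_r) of positive integers the system (X^r, f^{a₁} × f^{a₂} × ⋯ × f^{a_r}) is also mildly mixing. In particular, (X,f) is strongly multi-transitive. -/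
open Function Set Filter Topology MeasureTheory

/-- A system is mildly mixing if it is weakly disjoint from every transitive
topological dynamical system. -/
def MildlyMixing {X : Type*} [TopologicalSpace X] (f : X → X) : Prop :=
  ∀ (Y : Type*) [MetricSpace Y] [CompactSpace Y] (g : Y → Y), Continuous g →
    IsTopTransitive g → IsTopTransitive (fun p : X × Y => (f p.1, g p.2))

/-! Mild mixing passes to factors, and by the Kuratowski embedding the universe of the test
systems does not matter. Testing `f` against `g × h` shows that products of mildly mixing systems
are mildly mixing. For iterates, `f^[n+1] × g` is `f × T` seen on the bottom floor, where `T` is the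
tower of height `n + 1` over `g`, which is transitive whenever `g` is. Finally, a mildly mixing
system is transitive: test it against the one-point system. -/

universe u v w w₁ w₂

section Factor

variable {A : Type u} {B : Type v} [TopologicalSpace A] [TopologicalSpace B]

theorem IsTopTransitive.of_semiconj_s6 {f : A → A} {g : B → B} (hf : IsTopTransitive f) {e : A → B}
    (he : Continuous e) (hs : Surjective e) (h : Semiconj e f g) : IsTopTransitive g := by
  intro U V hU hV hUne hVne
  obtain ⟨n, hn, _, ⟨x, hxU, rfl⟩, hxV⟩ :=
    hf _ _ (hU.preimage he) (hV.preimage he) (hUne.preimage hs) (hVne.preimage hs)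
  exact ⟨n, hn, e (f^[n] x), ⟨e x, hxU, (h.iterate_right n x).symm⟩, hxV⟩

theorem MildlyMixing.of_semiconj_s6 {f : A → A} {g : B → B} (hf : MildlyMixing.{u, w} f) {e : A → B}
    (he : Continuous e) (hs : Surjective e) (h : Semiconj e f g) : MildlyMixing.{v, w} g :=
  fun Z _ _ k hk hkt => (hf Z k hk hkt).of_semiconj_s6 (he.prodMap continuous_id)
    (hs.prodMap surjective_id) fun p => Prod.ext (h p.1) rfl

theorem MildlyMixing.isTopTransitive {f : A → A} (hf : MildlyMixing f) : IsTopTransitive f := by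
  have hid : IsTopTransitive (id : PUnit → PUnit) := fun _ _ _ _ ⟨u, hu⟩ ⟨v, hv⟩ =>
    ⟨1, le_rfl, v, ⟨u, hu, Subsingleton.elim _ _⟩, hv⟩
  exact (hf PUnit id continuous_id hid).of_semiconj_s6 continuous_fst Prod.fst_surjective
    fun _ => rfl

theorem mildlyMixing_of_unique [Unique A] (f : A → A) : MildlyMixing f :=
  fun _ _ _ _ _ hgt => hgt.of_semiconj_s6 (e := fun y => (default, y))
    (continuous_const.prodMk continuous_id)
    (fun p => ⟨p.2, Prod.ext (Subsingleton.elim _ _) rfl⟩)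
    fun _ => Prod.ext (Subsingleton.elim _ _) rfl

end Factor

/-- Every compact metric space is isometric to a compact subset of `ℓ^∞(ℕ, ℝ) : Type`, so the
universe of the test systems in `MildlyMixing` is irrelevant. -/
theorem MildlyMixing.change_universe {A : Type u} [TopologicalSpace A] {f : A → A}
    (hf : MildlyMixing.{u, v} f) : MildlyMixing.{u, w} f := by
  intro Y _ _ g hg hgt
  let E : Y ≃ₜ ULift.{v} (range (kuratowskiEmbedding Y)) :=
    (kuratowskiEmbedding.isometry Y).isometryEquivOnRange.toHomeomorph.trans Homeomorph.ulift.symm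
  have : CompactSpace (ULift.{v} (range (kuratowskiEmbedding Y))) := E.compactSpace
  have hE : Semiconj E g (E ∘ g ∘ E.symm) := fun y => by simp
  have hEt := hgt.of_semiconj_s6 E.continuous E.surjective hE
  refine (hf _ _ (E.continuous.comp (hg.comp E.symm.continuous)) hEt).of_semiconj_s6
    (continuous_id.prodMap E.symm.continuous) (surjective_id.prodMap E.symm.surjective) ?_
  exact fun p => Prod.ext rfl (by simp)

theorem Fin.isEmbedding_val (n : ℕ) : IsEmbedding (Fin.val : Fin n → ℕ) :=
  (IsClosedEmbedding.of_continuous_injective_isClosedMap continuous_of_discreteTopology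
    Fin.val_injective fun _ _ => isClosed_discrete _).isEmbedding

noncomputable instance Fin.metricSpace (n : ℕ) : MetricSpace (Fin n) :=
  (Fin.isEmbedding_val n).comapMetricSpace

section Tower

variable {Y : Type*}

def towerMap (g : Y → Y) (n : ℕ) (p : Y × Fin (n + 1)) : Y × Fin (n + 1) :=
  if p.2 = Fin.last n then (g p.1, 0) else (p.1, p.2 + 1)

theorem continuous_towerMap [TopologicalSpace Y] {g : Y → Y} (hg : Continuous g) (n : ℕ) :
    Continuous (towerMap g n) := by
  refine continuous_prod_of_discrete_right.mpr fun i => ?_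
  by_cases hi : i = Fin.last n <;> simp only [towerMap, hi, if_true, if_false] <;> fun_prop

theorem towerMap_iterate_fin (g : Y → Y) (n : ℕ) (y : Y) (r : Fin (n + 1)) :
    (towerMap g n)^[r] (y, 0) = (y, r) := by
  induction r using Fin.induction with
  | zero => rfl
  | succ i ih =>
    rw [Fin.val_succ, iterate_succ_apply', ← Fin.val_castSucc, ih, towerMap,
      if_neg (Fin.castSucc_lt_last i).ne, Fin.coeSucc_eq_succ]

theorem towerMap_iterate_height (g : Y → Y) (n : ℕ) (y : Y) :
    (towerMap g n)^[n + 1] (y, 0) = (g y, 0) := by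
  have htop := towerMap_iterate_fin g n y (Fin.last n)
  rw [Fin.val_last] at htop
  rw [iterate_succ_apply', htop, towerMap, if_pos rfl]

theorem towerMap_iterate (g : Y → Y) (n : ℕ) (y : Y) (r : Fin (n + 1)) (q : ℕ) :
    (towerMap g n)^[r + (n + 1) * q] (y, 0) = (g^[q] y, r) := by
  have hfloor : Semiconj (fun y => (y, (0 : Fin (n + 1)))) g ((towerMap g n)^[n + 1]) :=
    fun y => (towerMap_iterate_height g n y).symm
  rw [iterate_add_apply, iterate_mul, ← hfloor.iterate_right q, towerMap_iterate_fin]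

theorem isTopTransitive_towerMap [TopologicalSpace Y] {g : Y → Y} (hg : IsTopTransitive g)
    (n : ℕ) : IsTopTransitive (towerMap g n) := by
  rintro U V hU hV ⟨⟨y₀, i⟩, hy₀⟩ ⟨⟨z₀, j⟩, hz₀⟩
  obtain ⟨q, hq, _, ⟨y, hyU, rfl⟩, hyV⟩ := hg {y | (y, i) ∈ U} {y | (y, j) ∈ V}
    (hU.preimage (by fun_prop)) (hV.preimage (by fun_prop)) ⟨y₀, hy₀⟩ ⟨z₀, hz₀⟩
  have hi : (i : ℕ) < (n + 1) * q := i.is_lt.trans_le (Nat.le_mul_of_pos_right _ hq)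
  refine ⟨j + (n + 1) * q - i, by omega, _, ⟨(y, i), hyU, rfl⟩, ?_⟩
  rwa [← towerMap_iterate_fin g n y i, ← iterate_add_apply, Nat.sub_add_cancel (by omega),
    towerMap_iterate]

theorem IsTopTransitive.prodMap_iterate_of_towerMap [TopologicalSpace Y] {Z : Type*}
    [TopologicalSpace Z] {F : Z → Z} {g : Y → Y} {n : ℕ}
    (h : IsTopTransitive (Prod.map F (towerMap g n))) :
    IsTopTransitive (Prod.map F^[n + 1] g) := by
  intro U V hU hV ⟨⟨x₀, y₀⟩, h₀⟩ ⟨⟨x₁, y₁⟩, h₁⟩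
  have hbase (W : Set (Z × Y)) (hW : IsOpen W) :
      IsOpen {p : Z × (Y × Fin (n + 1)) | (p.1, p.2.1) ∈ W ∧ p.2.2 = 0} :=
    (hW.preimage (by fun_prop)).inter ((isOpen_discrete {0}).preimage (by fun_prop))
  obtain ⟨k, hk, _, ⟨⟨x, y, c⟩, ⟨hxyU, rfl⟩, rfl⟩, hV', hk0⟩ :=
    h _ _ (hbase U hU) (hbase V hV) ⟨(x₀, y₀, 0), h₀, rfl⟩ ⟨(x₁, y₁, 0), h₁, rfl⟩
  have htower : (towerMap g n)^[k] (y, 0) =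
      (g^[k / (n + 1)] y, ⟨k % (n + 1), Nat.mod_lt _ n.succ_pos⟩) := by
    conv_lhs => rw [← Nat.mod_add_div k (n + 1)]
    exact towerMap_iterate g n y ⟨_, Nat.mod_lt _ n.succ_pos⟩ _
  rw [Prod.map_iterate, Prod.map_apply, htower] at hV' hk0
  have hdvd : n + 1 ∣ k := Nat.dvd_of_mod_eq_zero (congrArg Fin.val hk0)
  refine ⟨k / (n + 1), Nat.div_pos (Nat.le_of_dvd hk hdvd) n.succ_pos, _, ⟨(x, y), hxyU, rfl⟩, ?_⟩
  rwa [Prod.map_iterate, Prod.map_apply, ← iterate_mul, Nat.mul_div_cancel' hdvd]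

end Tower

theorem MildlyMixing.iterate {A : Type u} [TopologicalSpace A] {f : A → A}
    (hf : MildlyMixing.{u, v} f) {n : ℕ} (hn : n ≠ 0) : MildlyMixing.{u, v} f^[n] := by
  obtain ⟨m, rfl⟩ := Nat.exists_eq_succ_of_ne_zero hn
  intro Y _ _ g hg hgt
  exact (hf _ (towerMap g m) (continuous_towerMap hg m)
    (isTopTransitive_towerMap hgt m)).prodMap_iterate_of_towerMap

theorem MildlyMixing.prodMap {A : Type u} {B : Type v} [TopologicalSpace A] [MetricSpace B]
    [CompactSpace B] {f : A → A} {g : B → B} (hg : Continuous g) (hf : MildlyMixing.{u, w₁} f)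
    (hgm : MildlyMixing.{v, w₂} g) : MildlyMixing.{max u v, w} (Prod.map f g) := by
  intro Z _ _ h hh hht
  have hgh : IsTopTransitive (Prod.map g h) := hgm.change_universe Z h hh hht
  exact (hf.change_universe _ (Prod.map g h) (hg.prodMap hh) hgh).of_semiconj_s6
    (Homeomorph.prodAssoc A B Z).symm.continuous (Homeomorph.prodAssoc A B Z).symm.surjective
    fun _ => rfl

theorem MildlyMixing.piMap {r : ℕ} {X : Fin r → Type u} [∀ i, MetricSpace (X i)]
    [∀ i, CompactSpace (X i)] {f : ∀ i, X i → X i} (hc : ∀ i, Continuous (f i))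
    (hf : ∀ i, MildlyMixing.{u, v} (f i)) : MildlyMixing.{u, w} (fun x i => f i (x i)) := by
  induction r with
  | zero => exact mildlyMixing_of_unique _
  | succ r ih =>
    have htail := ih (fun i => hc i.succ) (fun i => hf i.succ)
    refine ((hf 0).prodMap (continuous_pi fun i => (hc i.succ).comp (continuous_apply i))
      htail).of_semiconj_s6 (continuous_fst.finCons continuous_snd) (Fin.consEquiv X).surjective
      fun p => funext fun i => ?_
    exact Fin.cases rfl (fun _ => rfl) i

theorem mildlyMixing_products_mildlyMixing
    {X : Type*} [MetricSpace X] [CompactSpace X] (f : X → X) (hf : Continuous f)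
    (hmm : MildlyMixing f) :
    (∀ r : ℕ, 1 ≤ r → ∀ a : Fin r → ℕ, (∀ i, 1 ≤ a i) →
      MildlyMixing (fun x : Fin r → X => fun i => f^[a i] (x i))) ∧
    StrongMultiTrans f := by
  have hpow (r : ℕ) (a : Fin r → ℕ) (ha : ∀ i, 1 ≤ a i) :
      MildlyMixing.{_, 0} (fun x : Fin r → X => fun i => f^[a i] (x i)) :=
    .piMap (fun i => hf.iterate (a i)) fun i => hmm.iterate (Nat.one_le_iff_ne_zero.mp (ha i))
  exact ⟨fun r _ a ha => (hpow r a ha).change_universe,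
    fun r _ a ha => (hpow r a ha).isTopTransitive⟩
end

section
/- Let (X,f) be a topological dynamical system. If (X,f) is an HY-system (totally transitive with dense small periodic sets), then (X,f) is weakly disjoint from every totally transitive topological dynamical system. -/
/-!
Given open rectangles `U₁ × U₂` and `V₁ × V₂`, transitivity of `f` gives `m` with
`W = U₁ ∩ f^{-m} V₁ ≠ ∅`, and a small periodic set `Z ⊆ W` of period `k` shows that every
time `m + k n` lies in `N(U₁, V₁)`. On the other side `g` is surjective, so `g^{-m} V₂ ≠ ∅`,
and transitivity of `g^k` yields `n ≥ 1` with `m + k n ∈ N(U₂, V₂)`.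
-/

open Function Set Filter Topology MeasureTheory

/-- `(X, f)` is totally transitive if `f^[n]` is transitive for every `n ≥ 1`. -/
def TotallyTrans {X : Type*} [TopologicalSpace X] (f : X → X) : Prop :=
  ∀ n : ℕ, 1 ≤ n → IsTopTransitive (f^[n])

/-- `(X, f)` has dense small periodic sets if every non-empty open set contains a non-empty
closed set invariant under some iterate `f^[k]`, `k ≥ 1`. -/
def DenseSmallPeriodicSets {X : Type*} [TopologicalSpace X] (f : X → X) : Prop :=
  ∀ U : Set X, IsOpen U → U.Nonempty →
    ∃ Y : Set X, Y.Nonempty ∧ IsClosed Y ∧ Y ⊆ U ∧ ∃ k : ℕ, 1 ≤ k ∧ f^[k] '' Y ⊆ Y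

/-- An HY-system is a totally transitive system with dense small periodic sets. -/
def HYSystem {X : Type*} [TopologicalSpace X] (f : X → X) : Prop :=
  TotallyTrans f ∧ DenseSmallPeriodicSets f

theorem IsTopTransitive.surjective {Y : Type*} [TopologicalSpace Y] [CompactSpace Y]
    [T2Space Y] {g : Y → Y} (hg : Continuous g) (htr : IsTopTransitive g) :
    Surjective g := by
  intro y
  by_contra hy
  have hopen : IsOpen (range g)ᶜ := (isCompact_range hg).isClosed.isOpen_compl
  obtain ⟨n, hn, _, ⟨x, -, rfl⟩, hx⟩ :=
    htr univ (range g)ᶜ isOpen_univ hopen ⟨y, trivial⟩ ⟨y, hy⟩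
  obtain ⟨n, rfl⟩ := Nat.exists_eq_add_of_le' hn
  exact hx ⟨g^[n] x, (iterate_succ_apply' g n x).symm⟩

theorem TotallyTrans.isTopTransitive {X : Type*} [TopologicalSpace X] {f : X → X}
    (htt : TotallyTrans f) : IsTopTransitive f :=
  htt 1 le_rfl

theorem mem_hittingTimes_iff {X : Type*} [TopologicalSpace X] {f : X → X} {U V : Set X}
    {n : ℕ} : n ∈ HittingTimes f U V ↔ 1 ≤ n ∧ (U ∩ f^[n] ⁻¹' V).Nonempty :=
  and_congr_right' image_inter_nonempty_iff

theorem IsTopTransitive.hittingTimes_nonempty {X : Type*} [TopologicalSpace X] {f : X → X}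
    (htr : IsTopTransitive f) {U V : Set X} (hU : IsOpen U) (hV : IsOpen V)
    (hUne : U.Nonempty) (hVne : V.Nonempty) : (HittingTimes f U V).Nonempty :=
  htr U V hU hV hUne hVne

theorem isTopTransitive_prodMap_of_hittingTimes {X Y : Type*} [TopologicalSpace X]
    [TopologicalSpace Y] {f : X → X} {g : Y → Y}
    (h : ∀ U₁ V₁ : Set X, ∀ U₂ V₂ : Set Y, IsOpen U₁ → IsOpen V₁ → IsOpen U₂ → IsOpen V₂ →
      U₁.Nonempty → V₁.Nonempty → U₂.Nonempty → V₂.Nonempty →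
      (HittingTimes f U₁ V₁ ∩ HittingTimes g U₂ V₂).Nonempty) :
    IsTopTransitive (fun p : X × Y => (f p.1, g p.2)) := by
  rintro S T hS hT ⟨⟨x₀, y₀⟩, hp⟩ ⟨⟨x₁, y₁⟩, hq⟩
  obtain ⟨U₁, U₂, hU₁, hU₂, hx₀, hy₀, hUS⟩ := isOpen_prod_iff.mp hS x₀ y₀ hp
  obtain ⟨V₁, V₂, hV₁, hV₂, hx₁, hy₁, hVT⟩ := isOpen_prod_iff.mp hT x₁ y₁ hq
  obtain ⟨n, ⟨hn, x, ⟨x', hx', rfl⟩, hx⟩, -, y, ⟨y', hy', rfl⟩, hy⟩ :=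
    h U₁ V₁ U₂ V₂ hU₁ hV₁ hU₂ hV₂ ⟨x₀, hx₀⟩ ⟨x₁, hx₁⟩ ⟨y₀, hy₀⟩ ⟨y₁, hy₁⟩
  have hxy : (f^[n] x', g^[n] y') ∈ V₁ ×ˢ V₂ := ⟨hx, hy⟩
  exact ⟨n, hn, _, ⟨(x', y'), hUS ⟨hx', hy'⟩, congrFun (Prod.map_iterate f g n) (x', y')⟩,
    hVT hxy⟩

theorem DenseSmallPeriodicSets.exists_progression_subset_hittingTimes {X : Type*}
    [TopologicalSpace X] {f : X → X} (hf : Continuous f) (htr : IsTopTransitive f)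
    (hdsp : DenseSmallPeriodicSets f) {U V : Set X} (hU : IsOpen U) (hV : IsOpen V)
    (hUne : U.Nonempty) (hVne : V.Nonempty) :
    ∃ m k : ℕ, 1 ≤ k ∧ ∀ n : ℕ, m + k * n ∈ HittingTimes f U V := by
  obtain ⟨m, hmem⟩ := htr.hittingTimes_nonempty hU hV hUne hVne
  obtain ⟨hm, hW⟩ := mem_hittingTimes_iff.mp hmem
  obtain ⟨Z, ⟨z, hz⟩, -, hZW, k, hk, hZ⟩ :=
    hdsp _ (hU.inter (hV.preimage (hf.iterate m))) hW
  have hZk : MapsTo f^[k] Z Z := mapsTo_iff_image_subset.mpr hZ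
  refine ⟨m, k, hk, fun n => mem_hittingTimes_iff.mpr ⟨by omega, z, (hZW hz).1, ?_⟩⟩
  have hzn : f^[k * n] z ∈ Z := by
    rw [iterate_mul]
    exact hZk.iterate n hz
  rw [mem_preimage, iterate_add_apply]
  exact (hZW hzn).2

theorem TotallyTrans.exists_add_mul_mem_hittingTimes {Y : Type*} [TopologicalSpace Y]
    [CompactSpace Y] [T2Space Y] {g : Y → Y} (hg : Continuous g) (htt : TotallyTrans g)
    {U V : Set Y} (hU : IsOpen U) (hV : IsOpen V) (hUne : U.Nonempty) (hVne : V.Nonempty)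
    {k : ℕ} (hk : 1 ≤ k) (m : ℕ) : ∃ n : ℕ, m + k * n ∈ HittingTimes g U V := by
  have hVm : (g^[m] ⁻¹' V).Nonempty :=
    hVne.preimage ((htt.isTopTransitive.surjective hg).iterate m)
  obtain ⟨n, hnmem⟩ :=
    (htt k hk).hittingTimes_nonempty hU (hV.preimage (hg.iterate m)) hUne hVm
  obtain ⟨hn, y, hyU, hy⟩ := mem_hittingTimes_iff.mp hnmem
  refine ⟨n, mem_hittingTimes_iff.mpr ⟨by nlinarith, y, hyU, ?_⟩⟩
  rwa [mem_preimage, iterate_add_apply, iterate_mul]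

theorem HYSystem_weakly_disjoint_totallyTrans_general
    {X : Type*} [MetricSpace X] (f : X → X) (hf : Continuous f)
    (hHY : HYSystem f) :
    ∀ (Y : Type*) [MetricSpace Y] [CompactSpace Y] (g : Y → Y), Continuous g →
      TotallyTrans g → IsTopTransitive (fun p : X × Y => (f p.1, g p.2)) := by
  intro Y _ _ g hg hgt
  refine isTopTransitive_prodMap_of_hittingTimes
    fun U₁ V₁ U₂ V₂ hU₁ hV₁ hU₂ hV₂ hU₁ne hV₁ne hU₂ne hV₂ne => ?_
  obtain ⟨m, k, hk, hprog⟩ := hHY.2.exists_progression_subset_hittingTimes hf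
    hHY.1.isTopTransitive hU₁ hV₁ hU₁ne hV₁ne
  obtain ⟨n, hn⟩ := hgt.exists_add_mul_mem_hittingTimes hg hU₂ hV₂ hU₂ne hV₂ne hk m
  exact ⟨m + k * n, hprog n, hn⟩

theorem HYSystem_weakly_disjoint_totallyTrans
    {X : Type*} [MetricSpace X] [CompactSpace X] (f : X → X) (hf : Continuous f)
    (hHY : HYSystem f) :
    ∀ (Y : Type*) [MetricSpace Y] [CompactSpace Y] (g : Y → Y), Continuous g →
      TotallyTrans g → IsTopTransitive (fun p : X × Y => (f p.1, g p.2)) :=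
  HYSystem_weakly_disjoint_totallyTrans_general f hf hHY
end

section
/- Let (X,f) be a topological dynamical system and a = (a₁,…,a_r) a vector of positive integers. Then (X,f) is multi-transitive with respect to a if and only if for every two non-empty open subsets U, V of X the hitting time set N(U,V) belongs to the family F[a], i.e., for every (n₁,…,n_r) ∈ ℤ₊^r there exists k ≥ 1 such that ka_i + n_i ∈ N(U,V) for all i = 1,…,r. -/
open Function Set Filter Topology MeasureTheory

lemma pi_iterate {X : Type*} (f : X → X) {r : ℕ} (a : Fin r → ℕ) (k : ℕ) (x : Fin r → X) :
    (fun x : Fin r → X => fun i => f^[a i] (x i))^[k] x = fun i => f^[k * a i] (x i) := by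
  induction k generalizing x with
  | zero => simp
  | succ k ih =>
      rw [Function.iterate_succ_apply, ih]
      funext i
      rw [← Function.iterate_add_apply, Nat.succ_mul, Nat.add_comm (k * a i)]

/-- Synchronization lemma: for a transitive system and finitely many nonempty open
sets, there is a nonempty open set `W` and times `m i` with `f^[m i] '' W ⊆ U i`. -/
lemma sync_lemma {X : Type*} [TopologicalSpace X] [Nonempty X] {f : X → X}
    (hf : Continuous f) (hT : IsTopTransitive f) {r : ℕ} (U : Fin r → Set X)
    (hUo : ∀ i, IsOpen (U i)) (hUn : ∀ i, (U i).Nonempty) (s : Finset (Fin r)) :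
    ∃ W : Set X, IsOpen W ∧ W.Nonempty ∧ ∃ m : Fin r → ℕ,
      ∀ i ∈ s, ∀ x ∈ W, f^[m i] x ∈ U i := by
  classical
  induction s using Finset.induction_on with
  | empty => exact ⟨univ, isOpen_univ, univ_nonempty, 0, by simp⟩
  | @insert j s hj ih =>
      obtain ⟨W, hWo, hWn, m, hm⟩ := ih
      obtain ⟨n, -, y, ⟨x, hxW, rfl⟩, hyU⟩ := hT W (U j) hWo (hUo j) hWn (hUn j)
      refine ⟨W ∩ (f^[n]) ⁻¹' U j, hWo.inter ((hUo j).preimage (hf.iterate n)),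
        ⟨x, hxW, hyU⟩, Function.update m j n, ?_⟩
      intro i hi z hz
      rcases Finset.mem_insert.mp hi with rfl | h2
      · simpa using hz.2
      · rw [Function.update_of_ne (fun h : i = j => hj (h ▸ h2))]
        exact hm i h2 z hz.1

lemma surj_of_multiTrans {X : Type*} [MetricSpace X] [CompactSpace X] [Nonempty X]
    {f : X → X} (hf : Continuous f) {r : ℕ} (hr : 1 ≤ r) {a : Fin r → ℕ} (ha : ∀ i, 1 ≤ a i)
    (hM : MultiTransWrt f a) : Function.Surjective f := by
  have hdense : Dense (Set.range f) := by
    rw [dense_iff_inter_open]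
    intro V hVo hVn
    set i₀ : Fin r := ⟨0, hr⟩
    obtain ⟨v₀, hv₀⟩ := hVn
    obtain ⟨n, hn, y, ⟨x, -, rfl⟩, hy⟩ := hM univ ((fun z : Fin r → X => z i₀) ⁻¹' V)
      isOpen_univ (hVo.preimage (continuous_apply i₀)) univ_nonempty
      ⟨fun _ => v₀, hv₀⟩
    rw [pi_iterate] at hy
    have h1 : 1 ≤ n * a i₀ := Nat.one_le_iff_ne_zero.mpr
      (Nat.mul_ne_zero (by omega) (by have := ha i₀; omega))
    obtain ⟨p, hp⟩ := Nat.exists_eq_add_of_le h1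
    refine ⟨f^[n * a i₀] (x i₀), hy, ?_⟩
    rw [hp, Function.iterate_add_apply]
    exact ⟨f^[p] (x i₀), by simp⟩
  have hclosed : IsClosed (Set.range f) := (isCompact_range hf).isClosed
  intro y
  have : y ∈ Set.range f := by
    rw [← hclosed.closure_eq]; exact hdense y
  exact this

theorem multiTransWrt_iff_family_transitive
    {X : Type*} [MetricSpace X] [CompactSpace X] (f : X → X) (hf : Continuous f)
    (r : ℕ) (hr : 1 ≤ r) (a : Fin r → ℕ) (ha : ∀ i, 1 ≤ a i) :
    MultiTransWrt f a ↔
      ∀ U V : Set X, IsOpen U → IsOpen V → U.Nonempty → V.Nonempty →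
        ∀ nv : Fin r → ℕ, ∃ k : ℕ, 1 ≤ k ∧
          ∀ i : Fin r, k * a i + nv i ∈ HittingTimes f U V := by
  classical
  constructor
  · intro hM U V hUo hVo hUn hVn nv
    obtain ⟨u₀, hu₀⟩ := hUn
    have hne : Nonempty X := ⟨u₀⟩
    have hsurj := surj_of_multiTrans hf hr ha hM
    have hWn : ∀ i, ∃ y, f^[nv i] y ∈ V := by
      intro i
      obtain ⟨v₀, hv₀⟩ := hVn
      obtain ⟨y, hy⟩ := (hsurj.iterate (nv i)) v₀
      exact ⟨y, hy ▸ hv₀⟩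
    choose w hw using hWn
    obtain ⟨k, hk, z, ⟨x, hxA, rfl⟩, hzB⟩ := hM (univ.pi fun _ => U)
      (univ.pi fun i => (f^[nv i]) ⁻¹' V)
      (isOpen_set_pi finite_univ fun i _ => hUo)
      (isOpen_set_pi finite_univ fun i _ => hVo.preimage (hf.iterate _))
      ⟨fun _ => u₀, fun i _ => hu₀⟩ ⟨w, fun i _ => hw i⟩
    refine ⟨k, hk, fun i => ?_⟩
    rw [pi_iterate] at hzB
    have hx : x i ∈ U := hxA i (mem_univ i)
    have hz : f^[nv i] (f^[k * a i] (x i)) ∈ V := hzB i (mem_univ i)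
    rw [← Function.iterate_add_apply] at hz
    refine ⟨?_, ⟨_, ⟨x i, hx, rfl⟩, ?_⟩⟩
    · have h1 : 1 * 1 ≤ k * a i := Nat.mul_le_mul hk (ha i)
      omega
    · rw [Nat.add_comm]; exact hz
  · intro H U' V' hU'o hV'o hU'n hV'n
    obtain ⟨p, hp⟩ := hU'n
    obtain ⟨q, hq⟩ := hV'n
    have hne : Nonempty X := ⟨p ⟨0, hr⟩⟩
    have box : ∀ S : Set (Fin r → X), IsOpen S → ∀ z ∈ S, ∃ u : Fin r → Set X,
        (∀ i, IsOpen (u i)) ∧ (∀ i, z i ∈ u i) ∧ univ.pi u ⊆ S := by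
      intro S hS z hz
      obtain ⟨I, u, hu, hsub⟩ := isOpen_pi_iff.mp hS z hz
      refine ⟨fun i => if i ∈ I then u i else univ, fun i => ?_, fun i => ?_, ?_⟩
      · by_cases h : i ∈ I
        · simpa [h] using (hu i h).1
        · simp [h]
      · by_cases h : i ∈ I
        · simpa [h] using (hu i h).2
        · simp [h]
      · intro y hy
        apply hsub
        intro i hi
        have := hy i (mem_univ i)
        simpa [Finset.mem_coe.mp hi] using this
    obtain ⟨u, huo, hup, huS⟩ := box U' hU'o p hp
    obtain ⟨v, hvo, hvp, hvS⟩ := box V' hV'o q hq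
    have hT : IsTopTransitive f := by
      intro A B hAo hBo hAn hBn
      obtain ⟨k, hk, hmem⟩ := H A B hAo hBo hAn hBn 0
      exact ⟨k * a ⟨0, hr⟩ + 0, (hmem ⟨0, hr⟩).1, (hmem ⟨0, hr⟩).2⟩
    obtain ⟨W, hWo, hWn, m, hm⟩ := sync_lemma hf hT u huo (fun i => ⟨p i, hup i⟩) Finset.univ
    obtain ⟨Z, hZo, hZn, l, hl⟩ := sync_lemma hf hT v hvo (fun i => ⟨q i, hvp i⟩) Finset.univ
    set c := Finset.univ.sup l with hc
    have hcl : ∀ i, l i ≤ c * a i := by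
      intro i
      calc l i ≤ c := Finset.le_sup (Finset.mem_univ i)
        _ = c * 1 := (Nat.mul_one c).symm
        _ ≤ c * a i := Nat.mul_le_mul_left c (ha i)
    obtain ⟨k, hk, hmem⟩ := H W Z hWo hZo hWn hZn (fun i => m i + c * a i - l i)
    have key : ∀ i, ∃ x, x ∈ W ∧ f^[k * a i + (m i + c * a i - l i)] x ∈ Z := by
      intro i
      obtain ⟨-, y, ⟨x, hx, rfl⟩, hyZ⟩ := hmem i
      exact ⟨x, hx, hyZ⟩
    choose x hxW hxZ using key
    refine ⟨k + c, by omega, ?_⟩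
    refine ⟨(fun x : Fin r → X => fun i => f^[a i] (x i))^[k + c] (fun i => f^[m i] (x i)),
      ⟨_, huS (fun i _ => hm i (Finset.mem_univ i) (x i) (hxW i)), rfl⟩, ?_⟩
    apply hvS
    intro i _
    rw [pi_iterate]
    show f^[(k + c) * a i] (f^[m i] (x i)) ∈ v i
    have h1 : f^[l i] (f^[k * a i + (m i + c * a i - l i)] (x i)) ∈ v i :=
      hl i (Finset.mem_univ i) _ (hxZ i)
    rw [← Function.iterate_add_apply] at h1
    rw [← Function.iterate_add_apply]
    have heq : (k + c) * a i + m i = l i + (k * a i + (m i + c * a i - l i)) := by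
      have h2 := hcl i
      rw [Nat.add_mul]
      omega
    rw [heq]
    exact h1
end

section
/- Let (X,f) be a topological dynamical system and A = (a_i)_{i≥1} a sequence of positive integers. Then (X,f) is multi-transitive with respect to the sequence A (i.e., the countable product system (X^∞, f^{a₁} × f^{a₂} × ⋯) with the product topology is transitive) if and only if for every two non-empty open subsets U, V of X the hitting time set N(U,V) belongs to F[A] = ⋂_{i≥1} F[(a₁,…,a_i)]. -/
open Function Set Filter Topology MeasureTheory

lemma prodIter {X : Type*} (f : X → X) (a : ℕ → ℕ) (n : ℕ) (x : ℕ → X) (i : ℕ) :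
    (fun x : ℕ → X => fun i => f^[a i] (x i))^[n] x i = f^[n * a i] (x i) := by
  induction n generalizing x with
  | zero => simp
  | succ n ih =>
    rw [Function.iterate_succ_apply']
    show f^[a i] ((fun x : ℕ → X => fun i => f^[a i] (x i))^[n] x i) = f^[(n + 1) * a i] (x i)
    rw [ih, ← Function.iterate_add_apply,
      show a i + n * a i = (n + 1) * a i by ring]

lemma preimage_nonempty' {X : Type*} [TopologicalSpace X] [Nonempty X] (f : X → X)
    (hf : Continuous f) (a : ℕ → ℕ) (ha : ∀ i, 1 ≤ a i)
    (hT : IsTopTransitive (fun x : ℕ → X => fun i => f^[a i] (x i))) :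
    ∀ (W : Set X), IsOpen W → W.Nonempty → ∀ m, ∃ x, f^[m] x ∈ W := by
  have hQ : ∀ (W : Set X), IsOpen W → W.Nonempty →
      ∃ N, 1 ≤ N ∧ ∃ x, f^[N] x ∈ W := by
    intro W hW ⟨w, hw⟩
    obtain ⟨n, hn, z, ⟨p, _, rfl⟩, hzV⟩ :=
      hT univ ((fun x : ℕ → X => x 0) ⁻¹' W) isOpen_univ
        (hW.preimage (continuous_apply 0)) univ_nonempty ⟨fun _ => w, hw⟩
    refine ⟨n * a 0, Nat.one_le_iff_ne_zero.mpr ?_, p 0, ?_⟩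
    · exact Nat.mul_ne_zero (by omega) (by have := ha 0; omega)
    · have := prodIter f a n p 0
      simpa [this] using hzV
  intro W hW hWne m
  induction m using Nat.strong_induction_on generalizing W with
  | _ m ih =>
    match m with
    | 0 => exact hWne.imp fun x hx => by simpa using hx
    | (m+1) =>
      obtain ⟨N, hN1, x, hx⟩ := hQ W hW hWne
      by_cases hc : m + 1 ≤ N
      · refine ⟨f^[N - (m+1)] x, ?_⟩
        rw [← Function.iterate_add_apply, Nat.add_sub_cancel' hc]
        exact hx
      · obtain ⟨y, hy⟩ := ih (m + 1 - N) (by omega) ((f^[N])⁻¹' W)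
          (hW.preimage (hf.iterate N)) ⟨x, hx⟩
        refine ⟨y, ?_⟩
        rw [show m + 1 = N + (m + 1 - N) by omega, Function.iterate_add_apply]
        exact hy

lemma chain_lemma' {X : Type*} [TopologicalSpace X] (f : X → X) (hf : Continuous f)
    (hT : IsTopTransitive f) (A : ℕ → Set X) (hA : ∀ i, IsOpen (A i))
    (hAne : ∀ i, (A i).Nonempty) :
    ∀ r : ℕ, ∃ (U : Set X) (m : ℕ → ℕ), IsOpen U ∧ U.Nonempty ∧
      ∀ i < r, ∀ x ∈ U, f^[m i] x ∈ A i := by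
  intro r
  induction r with
  | zero => exact ⟨A 0, fun _ => 0, hA 0, hAne 0, fun i hi => absurd hi (Nat.not_lt_zero i)⟩
  | succ r ih =>
    obtain ⟨U, m, hUo, hUne, hm⟩ := ih
    obtain ⟨n, _, z, ⟨u, hu, rfl⟩, hzA⟩ := hT U (A r) hUo (hA r) hUne (hAne r)
    refine ⟨U ∩ (f^[n])⁻¹' (A r), Function.update m r n,
      hUo.inter ((hA r).preimage (hf.iterate n)), ⟨u, hu, hzA⟩, ?_⟩
    intro i hi x hx
    rcases Nat.lt_succ_iff_lt_or_eq.mp hi with h | rfl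
    · rw [Function.update_of_ne (Nat.ne_of_lt h)]; exact hm i h x hx.1
    · rw [Function.update_self]; exact hx.2

lemma key_lemma' {X : Type*} [TopologicalSpace X] (f : X → X) (hf : Continuous f)
    (a : ℕ → ℕ) (ha : ∀ i, 1 ≤ a i)
    (H : ∀ U V : Set X, IsOpen U → IsOpen V → U.Nonempty → V.Nonempty →
        ∀ r : ℕ, 1 ≤ r → ∀ nv : Fin r → ℕ, ∃ k : ℕ, 1 ≤ k ∧
          ∀ i : Fin r, k * a (i : ℕ) + nv i ∈ HittingTimes f U V)
    (A B : ℕ → Set X) (hA : ∀ i, IsOpen (A i)) (hAne : ∀ i, (A i).Nonempty)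
    (hB : ∀ i, IsOpen (B i)) (hBne : ∀ i, (B i).Nonempty) (r : ℕ) (hr : 1 ≤ r) :
    ∃ n : ℕ, 1 ≤ n ∧ ∀ i < r, ∃ z ∈ A i, f^[n * a i] z ∈ B i := by
  have hTf : IsTopTransitive f := by
    intro U V hU hV hUne hVne
    obtain ⟨k, hk, h⟩ := H U V hU hV hUne hVne 1 le_rfl (fun _ => 0)
    have h0 := h 0
    exact ⟨k * a 0, by simpa using h0.1, by simpa using h0.2⟩
  obtain ⟨U, m, hUo, hUne, hm⟩ := chain_lemma' f hf hTf A hA hAne r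
  obtain ⟨V, l, hVo, hVne, hl⟩ := chain_lemma' f hf hTf B hB hBne r
  set c := (Finset.range r).sup l with hcdef
  have hc : ∀ i < r, l i ≤ c * a i := by
    intro i hi
    calc l i ≤ c := Finset.le_sup (Finset.mem_range.mpr hi)
    _ ≤ c * a i := Nat.le_mul_of_pos_right c (ha i)
  obtain ⟨k, hk, hkey⟩ := H U V hUo hVo hUne hVne r hr (fun i => c * a i + m i - l i)
  refine ⟨k + c, le_trans hk (Nat.le_add_right _ _), ?_⟩
  intro i hi
  obtain ⟨hpos, w, ⟨u, hu, rfl⟩, hwV⟩ := hkey ⟨i, hi⟩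
  refine ⟨f^[m i] u, hm i hi u hu, ?_⟩
  have h1 : (k + c) * a i = k * a i + c * a i := add_mul k c (a i)
  have h2 := hc i hi
  have harith : (k + c) * a i + m i =
      l i + (k * a (⟨i, hi⟩ : Fin r) + (c * a (⟨i, hi⟩ : Fin r) + m (⟨i, hi⟩ : Fin r) - l (⟨i, hi⟩ : Fin r))) := by
    simp only [Fin.val_mk] at *
    omega
  rw [← Function.iterate_add_apply, harith, Function.iterate_add_apply]
  exact hl i hi _ hwV
theorem seqMultiTrans_iff_familySeq_transitive
    {X : Type*} [MetricSpace X] [CompactSpace X] (f : X → X) (hf : Continuous f)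
    (a : ℕ → ℕ) (ha : ∀ i, 1 ≤ a i) :
    IsTopTransitive (fun x : ℕ → X => fun i => f^[a i] (x i)) ↔
      ∀ U V : Set X, IsOpen U → IsOpen V → U.Nonempty → V.Nonempty →
        ∀ r : ℕ, 1 ≤ r → ∀ nv : Fin r → ℕ, ∃ k : ℕ, 1 ≤ k ∧
          ∀ i : Fin r, k * a (i : ℕ) + nv i ∈ HittingTimes f U V := by
  classical
  constructor
  · intro hT U V hU hV hUne hVne r hr nv
    obtain ⟨v0, hv0⟩ := hVne
    have : Nonempty X := ⟨v0⟩
    have hpre := preimage_nonempty' f hf a ha hT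
    set m : ℕ → ℕ := fun i => if h : i < r then nv ⟨i, h⟩ else 0 with hmdef
    set U' : Set (ℕ → X) := (↑(Finset.range r) : Set ℕ).pi (fun _ => U) with hU'def
    set V' : Set (ℕ → X) := (↑(Finset.range r) : Set ℕ).pi (fun i => (f^[m i])⁻¹' V) with hV'def
    have hU'o : IsOpen U' := isOpen_set_pi (Finset.range r).finite_toSet (fun i _ => hU)
    have hV'o : IsOpen V' := isOpen_set_pi (Finset.range r).finite_toSet
      (fun i _ => hV.preimage (hf.iterate _))
    obtain ⟨u0, hu0⟩ := hUne
    have hU'ne : U'.Nonempty := ⟨fun _ => u0, fun i _ => hu0⟩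
    have hV'ne : V'.Nonempty := by
      choose q hq using fun i => hpre V hV ⟨v0, hv0⟩ (m i)
      exact ⟨q, fun i _ => hq i⟩
    obtain ⟨n, hn, z, ⟨p, hp, rfl⟩, hzV⟩ := hT U' V' hU'o hV'o hU'ne hV'ne
    refine ⟨n, hn, fun i => ?_⟩
    have hi : (i : ℕ) < r := i.isLt
    constructor
    · have := Nat.mul_pos hn (ha (i : ℕ))
      omega
    · refine ⟨f^[n * a (i : ℕ) + nv i] (p (i : ℕ)),
        ⟨p (i : ℕ), hp (i : ℕ) (Finset.mem_coe.mpr (Finset.mem_range.mpr hi)), rfl⟩, ?_⟩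
      have h1 := hzV (i : ℕ) (Finset.mem_coe.mpr (Finset.mem_range.mpr hi))
      simp only [Set.mem_preimage, prodIter f a n p] at h1
      rw [← Function.iterate_add_apply] at h1
      have hmi : m (i : ℕ) = nv i := by simp [hmdef, hi]
      rw [show n * a (i : ℕ) + nv i = m (i : ℕ) + n * a (i : ℕ) by omega]
      exact h1
  · intro H U' V' hU' hV' hU'ne hV'ne
    obtain ⟨x, hx⟩ := hU'ne
    obtain ⟨y, hy⟩ := hV'ne
    have : Nonempty X := ⟨x 0⟩
    obtain ⟨I, u, hIu, hIsub⟩ := isOpen_pi_iff.mp hU' x hx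
    obtain ⟨J, v, hJv, hJsub⟩ := isOpen_pi_iff.mp hV' y hy
    set A : ℕ → Set X := fun i => if h : i ∈ I then u i else univ with hAdef
    set B : ℕ → Set X := fun i => if h : i ∈ J then v i else univ with hBdef
    have hA : ∀ i, IsOpen (A i) := by
      intro i; simp only [hAdef]; split
      · exact (hIu i (by assumption)).1
      · exact isOpen_univ
    have hAne : ∀ i, (A i).Nonempty := by
      intro i; simp only [hAdef]; split
      · exact ⟨x i, (hIu i (by assumption)).2⟩
      · exact univ_nonempty
    have hB : ∀ i, IsOpen (B i) := by
      intro i; simp only [hBdef]; split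
      · exact (hJv i (by assumption)).1
      · exact isOpen_univ
    have hBne : ∀ i, (B i).Nonempty := by
      intro i; simp only [hBdef]; split
      · exact ⟨y i, (hJv i (by assumption)).2⟩
      · exact univ_nonempty
    set r := (I ∪ J).sup id + 1 with hrdef
    obtain ⟨n, hn, hz⟩ := key_lemma' f hf a ha H A B hA hAne hB hBne r (Nat.le_add_left 1 _)
    choose z hzA hzB using fun i (hi : i < r) => hz i hi
    have hltI : ∀ i ∈ I, i < r := fun i hi =>
      Nat.lt_succ_of_le (Finset.le_sup (f := id) (Finset.mem_union_left J hi))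
    have hltJ : ∀ i ∈ J, i < r := fun i hi =>
      Nat.lt_succ_of_le (Finset.le_sup (f := id) (Finset.mem_union_right I hi))
    set p : ℕ → X := fun i => if h : i < r then z i h else x i with hpdef
    refine ⟨n, hn, (fun x : ℕ → X => fun i => f^[a i] (x i))^[n] p, ⟨p, hIsub ?_, rfl⟩, hJsub ?_⟩
    · intro i hi
      have hi' := hltI i hi
      have hzAi := hzA i hi'
      have hiF : i ∈ I := Finset.mem_coe.mp hi
      simp only [hAdef, dif_pos hiF] at hzAi
      simpa [hpdef, hi'] using hzAi
    · intro i hi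
      have hi' := hltJ i hi
      have hzBi := hzB i hi'
      have hiF : i ∈ J := Finset.mem_coe.mp hi
      simp only [hBdef, dif_pos hiF] at hzBi
      rw [prodIter f a n p]
      simpa [hpdef, hi'] using hzBi
end

section
/- Let (X,f) be a topological dynamical system that is multi-transitive with respect to a sequence A of positive integers whose set of terms contains B − B = {b − b' : b, b' ∈ B, b > b'} for some infinite set B ⊆ ℕ. Let (Y,g) be a topological dynamical system admitting a g-invariant Borel probability measure μ with full support. Then for every two non-empty open subsets U, V of X and every non-empty open subset W of Y, there exists n ≥ 1 with f^n(U) ∩ V ≠ ∅ and g^n(W) ∩ W ≠ ∅. -/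
/-!
Fix `N > 1 / μ W` and `N` elements `b₁ < ⋯ < b_N` of `B`. Transitivity of the product system,
applied to the cylinders over the finitely many coordinates `i` with `a i = b_k - b_j`, yields one
`m ≥ 1` such that `f^[(b_k - b_j) m] '' U` meets `V` for all `j < k`. The `N` sets
`g^[b_j m] ⁻¹' W` all have measure `μ W`, so two of them meet, which says that
`g^[(b_k - b_j) m] '' W` meets `W` for some `j < k`.
-/

open Function Set Filter Topology MeasureTheory

theorem iterate_pi_map {ι X : Type*} (f : X → X) (a : ι → ℕ) (m : ℕ) (x : ι → X) :
    (fun x : ι → X => fun i => f^[a i] (x i))^[m] x = fun i => f^[a i * m] (x i) := by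
  induction m generalizing x with
  | zero => rfl
  | succ m ih =>
    rw [iterate_succ_apply, ih]
    funext i
    rw [Nat.mul_succ, iterate_add_apply]

theorem IsTopTransitive.exists_forall_image_iterate_mul_inter_nonempty {ι X : Type*}
    [TopologicalSpace X] {f : X → X} {a : ι → ℕ}
    (h : IsTopTransitive (fun x : ι → X => fun i => f^[a i] (x i))) (F : Finset ι)
    {U V : Set X} (hU : IsOpen U) (hV : IsOpen V) (hU' : U.Nonempty) (hV' : V.Nonempty) :
    ∃ m, 1 ≤ m ∧ ∀ i ∈ F, (f^[a i * m] '' U ∩ V).Nonempty := by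
  obtain ⟨u, hu⟩ := hU'
  obtain ⟨v, hv⟩ := hV'
  obtain ⟨m, hm, _, ⟨x, hxU, rfl⟩, hxV⟩ :=
    h ((F : Set ι).pi fun _ => U) ((F : Set ι).pi fun _ => V)
      (isOpen_set_pi F.finite_toSet fun _ _ => hU) (isOpen_set_pi F.finite_toSet fun _ _ => hV)
      ⟨fun _ => u, fun _ _ => hu⟩ ⟨fun _ => v, fun _ _ => hv⟩
  rw [iterate_pi_map] at hxV
  exact ⟨m, hm, fun i hi => ⟨_, ⟨x i, hxU i hi, rfl⟩, hxV i hi⟩⟩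

namespace MeasureTheory.MeasurePreserving

theorem exists_mem_iterate_sub_mem_of_measure_univ_lt_card_mul_measure {α : Type*}
    [MeasurableSpace α] {μ : Measure α} {f : α → α} (hf : MeasurePreserving f μ μ)
    {s : Set α} (hs : NullMeasurableSet s μ) {t : Finset ℕ}
    (hvol : μ (univ : Set α) < t.card * μ s) :
    ∃ x ∈ s, ∃ i ∈ t, ∃ j ∈ t, i < j ∧ f^[j - i] x ∈ s := by
  have hpre : ∀ i, NullMeasurableSet (f^[i] ⁻¹' s) μ := fun i =>
    hs.preimage (hf.iterate i).quasiMeasurePreserving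
  have hsum : μ (univ : Set α) < ∑ i ∈ t, μ (f^[i] ⁻¹' s) := by
    simpa [(hf.iterate _).measure_preimage hs] using hvol
  obtain ⟨i, hi, j, hj, hij, x, hxi : f^[i] x ∈ s, hxj : f^[j] x ∈ s⟩ :=
    exists_nonempty_inter_of_measure_univ_lt_sum_measure μ (fun i _ => hpre i) hsum
  wlog hlt : i < j generalizing i j
  · exact this j hj i hi hij.symm hxj hxi (hij.lt_or_gt.resolve_left hlt)
  refine ⟨f^[i] x, hxi, i, hi, j, hj, hlt, ?_⟩
  rwa [← iterate_add_apply, Nat.sub_add_cancel hlt.le]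

end MeasureTheory.MeasurePreserving

theorem seqMultiTrans_diffSet_claim_general
    {X : Type*} [MetricSpace X] (f : X → X)
    (a : ℕ → ℕ) (B : Set ℕ) (hB : B.Infinite)
    (hBa : ∀ b ∈ B, ∀ b' ∈ B, b' < b → b - b' ∈ Set.range a)
    (hA : IsTopTransitive (fun x : ℕ → X => fun i => f^[a i] (x i)))
    {Y : Type*} [MetricSpace Y] [MeasurableSpace Y] [BorelSpace Y]
    (g : Y → Y) (hg : Continuous g) (μ : Measure Y) [IsProbabilityMeasure μ]
    (hinv : ∀ s : Set Y, MeasurableSet s → μ (g ⁻¹' s) = μ s)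
    (hfull : ∀ W : Set Y, IsOpen W → W.Nonempty → 0 < μ W) :
    ∀ U V : Set X, IsOpen U → IsOpen V → U.Nonempty → V.Nonempty →
      ∀ W : Set Y, IsOpen W → W.Nonempty →
        ∃ n : ℕ, 1 ≤ n ∧ (f^[n] '' U ∩ V).Nonempty ∧ (g^[n] '' W ∩ W).Nonempty := by
  intro U V hU hV hU' hV' W hW hW'
  have hg_mp : MeasurePreserving g μ μ :=
    ⟨hg.measurable, Measure.ext fun s hs => by rw [Measure.map_apply hg.measurable hs, hinv s hs]⟩
  obtain ⟨N, hN⟩ := ENNReal.exists_nat_mul_gt (hfull W hW hW').ne' (measure_ne_top μ univ)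
  obtain ⟨t, htB, rfl⟩ := hB.exists_subset_card_eq N
  obtain ⟨m, hm, hhit⟩ := hA.exists_forall_image_iterate_mul_inter_nonempty
    ((t ×ˢ t).image fun p => invFun a (p.2 - p.1)) hU hV hU' hV'
  obtain ⟨y, hy, i, hi, j, hj, hij, hy'⟩ :=
    (hg_mp.iterate m).exists_mem_iterate_sub_mem_of_measure_univ_lt_card_mul_measure
      hW.measurableSet.nullMeasurableSet hN
  have ha : a (invFun a (j - i)) = j - i := invFun_eq (hBa j (htB hj) i (htB hi) hij)
  refine ⟨(j - i) * m, Nat.mul_pos (Nat.sub_pos_of_lt hij) hm, ?_, ⟨_, ⟨y, hy, rfl⟩, ?_⟩⟩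
  · rw [← ha]
    exact hhit _ (Finset.mem_image.2 ⟨(i, j), Finset.mem_product.2 ⟨hi, hj⟩, rfl⟩)
  · rwa [mul_comm, iterate_mul]

theorem seqMultiTrans_diffSet_claim
    {X : Type*} [MetricSpace X] [CompactSpace X] (f : X → X) (hf : Continuous f)
    (a : ℕ → ℕ) (ha : ∀ i, 1 ≤ a i) (B : Set ℕ) (hB : B.Infinite)
    (hBa : ∀ b ∈ B, ∀ b' ∈ B, b' < b → b - b' ∈ Set.range a)
    (hA : IsTopTransitive (fun x : ℕ → X => fun i => f^[a i] (x i)))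
    {Y : Type*} [MetricSpace Y] [CompactSpace Y] [MeasurableSpace Y] [BorelSpace Y]
    (g : Y → Y) (hg : Continuous g) (μ : Measure Y) [IsProbabilityMeasure μ]
    (hinv : ∀ s : Set Y, MeasurableSet s → μ (g ⁻¹' s) = μ s)
    (hfull : ∀ W : Set Y, IsOpen W → W.Nonempty → 0 < μ W) :
    ∀ U V : Set X, IsOpen U → IsOpen V → U.Nonempty → V.Nonempty →
      ∀ W : Set Y, IsOpen W → W.Nonempty →
        ∃ n : ℕ, 1 ≤ n ∧ (f^[n] '' U ∩ V).Nonempty ∧ (g^[n] '' W ∩ W).Nonempty :=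
  seqMultiTrans_diffSet_claim_general f a B hB hBa hA g hg μ hinv hfull
end

section
/- Let (X,f) be a topological dynamical system with X infinite. If (X,f) is multi-transitive with respect to the vector (1,2), i.e., the system (X×X, f×f²) is transitive, then (X,f) has sensitive dependence on initial conditions. -/
/-!
If `f` is not sensitive, then for every `δ > 0` some ball `B(x, ε)` has all its orbits
`δ`-shadowing the orbit of `x`. Transitivity of `f × f²` yields `u, v ∈ B(x, ε)` and `n ≥ 1`
with `fⁿ u ∈ B(x, ε)` and `f²ⁿ v` near an arbitrary point `t`. Since `f²ⁿ u = fⁿ (fⁿ u)`, the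
point `fⁿ x` is `δ`-close to both `fⁿ u ≈ x` and `f²ⁿ u ≈ f²ⁿ x ≈ f²ⁿ v ≈ t`, so every `t` lies
within `ε + 5δ` of `x`. Taking `δ` small compared with the distance of two distinct points
gives a contradiction.
-/

open Function Set Filter Topology MeasureTheory

lemma IsTopTransitive.exists_iterate_prodMap_mem {α β : Type*} [TopologicalSpace α]
    [TopologicalSpace β] {f : α → α} {g : β → β} (h : IsTopTransitive (Prod.map f g))
    {U₁ V₁ : Set α} {U₂ V₂ : Set β} (hU₁ : IsOpen U₁) (hU₂ : IsOpen U₂) (hV₁ : IsOpen V₁)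
    (hV₂ : IsOpen V₂) (hU₁ne : U₁.Nonempty) (hU₂ne : U₂.Nonempty) (hV₁ne : V₁.Nonempty)
    (hV₂ne : V₂.Nonempty) :
    ∃ n, 1 ≤ n ∧ ∃ u ∈ U₁, ∃ v ∈ U₂, f^[n] u ∈ V₁ ∧ g^[n] v ∈ V₂ := by
  obtain ⟨n, hn, _, ⟨⟨u, v⟩, ⟨hu, hv⟩, rfl⟩, hfu, hgv⟩ :=
    h _ _ (hU₁.prod hU₂) (hV₁.prod hV₂) (hU₁ne.prod hU₂ne) (hV₁ne.prod hV₂ne)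
  rw [Prod.map_iterate] at hfu hgv
  exact ⟨n, hn, u, hu, v, hv, hfu, hgv⟩

lemma dist_lt_of_forall_dist_iterate_le {X : Type*} [PseudoMetricSpace X] {f : X → X}
    (h : IsTopTransitive (Prod.map f f^[2])) {x : X} {ε δ : ℝ} (hε : 0 < ε) (hδ : 0 < δ)
    (hstable : ∀ y, dist x y < ε → ∀ n, 1 ≤ n → dist (f^[n] x) (f^[n] y) ≤ δ) (t : X) :
    dist x t < ε + 5 * δ := by
  have hball : (Metric.ball x ε).Nonempty := Metric.nonempty_ball.2 hε
  obtain ⟨n, hn, u, hu, v, hv, hnu, hnv⟩ := h.exists_iterate_prodMap_mem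
    Metric.isOpen_ball Metric.isOpen_ball Metric.isOpen_ball Metric.isOpen_ball
    hball hball hball (Metric.nonempty_ball.2 hδ)
  rw [Metric.mem_ball, dist_comm] at hu hv hnu
  rw [← iterate_mul, Metric.mem_ball] at hnv
  have h2n : 1 ≤ 2 * n := by omega
  have hxu : dist (f^[n] x) (f^[n] u) ≤ δ := hstable u hu n hn
  have hx_uu : dist (f^[n] x) (f^[2 * n] u) ≤ δ := by
    rw [two_mul, iterate_add_apply]
    exact hstable _ hnu n hn
  have hu2 : dist (f^[2 * n] x) (f^[2 * n] u) ≤ δ := hstable u hu _ h2n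
  have hv2 : dist (f^[2 * n] x) (f^[2 * n] v) ≤ δ := hstable v hv _ h2n
  calc dist x t
      ≤ dist x (f^[n] u) + dist (f^[n] u) (f^[n] x) + dist (f^[n] x) (f^[2 * n] u)
        + dist (f^[2 * n] u) (f^[2 * n] x) + dist (f^[2 * n] x) (f^[2 * n] v)
        + dist (f^[2 * n] v) t := by
        linarith [dist_triangle4 x (f^[n] u) (f^[n] x) (f^[2 * n] u),
          dist_triangle4 (f^[2 * n] u) (f^[2 * n] x) (f^[2 * n] v) t,
          dist_triangle x (f^[2 * n] u) t]
    _ < ε + 5 * δ := by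
        rw [dist_comm (f^[n] u), dist_comm (f^[2 * n] u)]
        linarith

theorem onetwo_trans_sensitive_general
    {X : Type*} [MetricSpace X] [Infinite X]
    (f : X → X)
    (h : IsTopTransitive (fun p : X × X => (f p.1, f^[2] p.2))) :
    ∃ δ : ℝ, 0 < δ ∧ ∀ x : X, ∀ ε : ℝ, 0 < ε →
      ∃ y : X, dist x y < ε ∧ ∃ n : ℕ, 1 ≤ n ∧ δ < dist (f^[n] x) (f^[n] y) := by
  obtain ⟨p, q, hpq⟩ := exists_pair_ne X
  set δ := dist p q / 12 with hδ_def
  have hδ : 0 < δ := div_pos (dist_pos.2 hpq) (by norm_num)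
  refine ⟨δ, hδ, fun x ε hε => ?_⟩
  by_contra! hstable
  have hε' : 0 < min ε δ := lt_min hε hδ
  have hstable' : ∀ y, dist x y < min ε δ → ∀ n, 1 ≤ n → dist (f^[n] x) (f^[n] y) ≤ δ :=
    fun y hy => hstable y (hy.trans_le (min_le_left _ _))
  have hp := dist_lt_of_forall_dist_iterate_le h hε' hδ hstable' p
  have hq := dist_lt_of_forall_dist_iterate_le h hε' hδ hstable' q
  linarith [dist_triangle_left p q x, min_le_right ε δ]

theorem onetwo_trans_sensitive
    {X : Type*} [MetricSpace X] [CompactSpace X] [Infinite X]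
    (f : X → X) (hf : Continuous f)
    (h : IsTopTransitive (fun p : X × X => (f p.1, f^[2] p.2))) :
    ∃ δ : ℝ, 0 < δ ∧ ∀ x : X, ∀ ε : ℝ, 0 < ε →
      ∃ y : X, dist x y < ε ∧ ∃ n : ℕ, 1 ≤ n ∧ δ < dist (f^[n] x) (f^[n] y) :=
  onetwo_trans_sensitive_general f h
end
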